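/- For a morphism φ from the term algebra T_n({x_1,...,x_r}) to L_n and the term t := ⋁_{(a_1,...,a_r) ∈ L_n^r} (J_{na_1}(x_1) ∧ ... ∧ J_{na_r}(x_r) ∧ s(a_1,...,a_r, f(a_1,...,a_r))), the disjunction collapses: φ(t) = φ(s(b_1,...,b_r, f(b_1,...,b_r))), where b_i := φ(x_i). -/

import Mathlib

/-- The underlying set of the standard LM_n-algebra: {0, 1/n, ..., (n-1)/n, 1} ⊆ ℚ. -/
def Ln (n : ℕ) : Set ℚ := {x | ∃ j : ℕ, j ≤ n ∧ x = (j : ℚ) / n}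

/-- The Chrysippian endomorphism Δ_i on ℚ: on L_n, Δ_i(j/n) = 1 iff i + j ≥ n + 1. -/
def Delta (n i : ℕ) (x : ℚ) : ℚ := if (n : ℚ) + 1 ≤ (i : ℚ) + x * n then 1 else 0

/-- Terms in the signature (∨, ∧, N, 0, 1, Δ_1, ..., Δ_n) over variables x_1, ..., x_r. -/
inductive LMTerm (r : ℕ) where
  | var (i : Fin r)
  | zero
  | one
  | neg (t : LMTerm r)
  | sup (t u : LMTerm r)
  | inf (t u : LMTerm r)
  | delta (i : ℕ) (t : LMTerm r)

/-- Evaluation of a term in the standard LM_n-algebra under a valuation φ. -/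
def LMTerm.eval (n : ℕ) {r : ℕ} (φ : Fin r → ℚ) : LMTerm r → ℚ
  | .var i => φ i
  | .zero => 0
  | .one => 1
  | .neg t => 1 - t.eval n φ
  | .sup t u => max (t.eval n φ) (u.eval n φ)
  | .inf t u => min (t.eval n φ) (u.eval n φ)
  | .delta i t => Delta n i (t.eval n φ)

/-- A function is Moisil representable if some term evaluates to it under
every valuation into L_n. -/
def Representable (n r : ℕ) (f : (Fin r → ℚ) → ℚ) : Prop :=
  ∃ t : LMTerm r, ∀ φ : Fin r → ℚ, (∀ i, φ i ∈ Ln n) → t.eval n φ = f φ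

/-- The set {0, 1, a_1, ..., a_r, 1 - a_1, ..., 1 - a_r}. -/
def Mset (r : ℕ) (a : Fin r → ℚ) : Set ℚ :=
  {x | x = 0 ∨ x = 1 ∨ ∃ i : Fin r, x = a i ∨ x = 1 - a i}

/-- The term J_i applied to a term v: J_n = Δ_1, J_0 = N Δ_n,
J_i = Δ_{n-i+1} ∧ N Δ_{n-i} for 0 < i < n. -/
def Jterm (n : ℕ) {r : ℕ} (i : ℕ) (v : LMTerm r) : LMTerm r :=
  if i = n then .delta 1 v
  else if i = 0 then .neg (.delta n v)
  else .inf (.delta (n - i + 1) v) (.neg (.delta (n - i) v))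

/-- The term s(a_1,...,a_r,c): 1 if c = 1, 0 if c = 0, x_i if i is minimal with
c = a_i, and N x_i if c ∉ {0, 1, a_1, ..., a_r} and i is minimal with c = 1 - a_i. -/
def sTerm {r : ℕ} (a : Fin r → ℚ) (c : ℚ) : LMTerm r :=
  if c = 1 then .one
  else if c = 0 then .zero
  else if h : (Finset.univ.filter (fun j : Fin r => c = a j)).Nonempty then
    .var ((Finset.univ.filter (fun j : Fin r => c = a j)).min' h)
  else if h' : (Finset.univ.filter (fun j : Fin r => c = 1 - a j)).Nonempty then
    .neg (.var ((Finset.univ.filter (fun j : Fin r => c = 1 - a j)).min' h'))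
  else .zero

/-- The conjunction J_{n a_1}(x_1) ∧ ... ∧ J_{n a_r}(x_r) ∧ s, where the tuple
(a_1, ..., a_r) ∈ L_n^r is encoded by v : Fin r → Fin (n+1), a_i = (v i)/n. -/
def conjTerm (n : ℕ) {r : ℕ} (v : Fin r → Fin (n + 1)) (s : LMTerm r) : LMTerm r :=
  (List.finRange r).foldr (fun i acc => .inf (Jterm n (v i) (.var i)) acc) s

/-- The tuple of rationals encoded by v : Fin r → Fin (n+1). -/
def tupOf (n : ℕ) {r : ℕ} (v : Fin r → Fin (n + 1)) : Fin r → ℚ :=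
  fun i => ((v i : ℕ) : ℚ) / n

/-- The disjunctive normal form term
t = ⋁_{a⃗ ∈ L_n^r} (J_{n a_1}(x_1) ∧ ... ∧ J_{n a_r}(x_r) ∧ s(a⃗, f(a⃗))). -/
noncomputable def bigTerm (n r : ℕ) (f : (Fin r → ℚ) → ℚ) : LMTerm r :=
  ((Finset.univ : Finset (Fin r → Fin (n + 1))).toList.map
    (fun v => conjTerm n v (sTerm (tupOf n v) (f (tupOf n v))))).foldr .sup .zero

/-! Under a valuation φ into L_n, `J_j(x_i)` evaluates to `1` if `φ i = j/n` and to `0`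
otherwise. Hence every disjunct of the normal form vanishes except the one indexed by the tuple
`φ` itself, which evaluates to `s(φ, f φ)`; as all values lie in `[0, 1]`, the join of the
disjuncts is that value. -/

lemma Ln_subset_Icc (n : ℕ) : Ln n ⊆ Set.Icc 0 1 := by
  rintro _ ⟨j, hj, rfl⟩
  exact ⟨by positivity, div_le_one_of_le₀ (by exact_mod_cast hj) n.cast_nonneg⟩

lemma Delta_natCast_div {n : ℕ} (hn : 0 < n) (i k : ℕ) :
    Delta n i ((k : ℚ) / n) = if n + 1 ≤ i + k then 1 else 0 := by
  rw [Delta, div_mul_cancel₀ _ (by positivity)]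
  norm_cast

lemma exists_tupOf_eq {n r : ℕ} {φ : Fin r → ℚ} (hφ : ∀ i, φ i ∈ Ln n) :
    ∃ v : Fin r → Fin (n + 1), tupOf n v = φ := by
  choose k hk hφk using hφ
  exact ⟨fun i => ⟨k i, Nat.lt_succ_of_le (hk i)⟩, funext fun i => (hφk i).symm⟩

namespace LMTerm

variable {n r : ℕ} {φ : Fin r → ℚ}

lemma eval_mem_Icc (hφ : ∀ i, φ i ∈ Set.Icc 0 1) (t : LMTerm r) :
    t.eval n φ ∈ Set.Icc 0 1 := by
  induction t with
  | var i => exact hφ i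
  | zero => simp [eval]
  | one => simp [eval]
  | neg t ih => exact ⟨sub_nonneg.2 ih.2, sub_le_self _ ih.1⟩
  | sup t u iht ihu => exact ⟨le_max_of_le_left iht.1, max_le iht.2 ihu.2⟩
  | inf t u iht ihu => exact ⟨le_min iht.1 ihu.1, min_le_of_left_le iht.2⟩
  | delta i t _ => unfold eval Delta; split_ifs <;> simp

lemma le_eval_foldr_sup {l : List (LMTerm r)} {t : LMTerm r} (ht : t ∈ l) :
    t.eval n φ ≤ (l.foldr sup zero).eval n φ := by
  induction l with
  | nil => simp at ht
  | cons u l ih =>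
    rcases List.mem_cons.1 ht with rfl | ht
    · exact le_max_left _ _
    · exact (ih ht).trans (le_max_right _ _)

lemma eval_foldr_sup_le {l : List (LMTerm r)} {c : ℚ} (hc : 0 ≤ c)
    (hl : ∀ t ∈ l, t.eval n φ ≤ c) : (l.foldr sup zero).eval n φ ≤ c := by
  induction l with
  | nil => exact hc
  | cons u l ih =>
    exact max_le (hl u List.mem_cons_self) (ih fun t ht => hl t (List.mem_cons_of_mem u ht))

lemma eval_Jterm (hn : 0 < n) {j : ℕ} (hj : j ≤ n) {t : LMTerm r} (ht : t.eval n φ ∈ Ln n) :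
    (Jterm n j t).eval n φ = if (j : ℚ) / n = t.eval n φ then 1 else 0 := by
  obtain ⟨k, hk, hkt⟩ := ht
  have hjk : (j : ℚ) / n = k / n ↔ j = k := by
    rw [div_left_inj' (by positivity), Nat.cast_inj]
  simp only [hkt, hjk]
  unfold Jterm
  split_ifs <;> simp only [eval, hkt, Delta_natCast_div hn] <;> split_ifs <;> norm_num <;> omega

lemma eval_foldr_inf_Jterm (hn : 0 < n) (hφ : ∀ i, φ i ∈ Ln n) (v : Fin r → Fin (n + 1))
    {s : LMTerm r} (hs : s.eval n φ ∈ Set.Icc 0 1) (l : List (Fin r)) :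
    (l.foldr (fun i acc => .inf (Jterm n (v i) (.var i)) acc) s).eval n φ =
      if ∀ i ∈ l, tupOf n v i = φ i then s.eval n φ else 0 := by
  induction l with
  | nil => simp
  | cons i l ih =>
    have hJ : (Jterm n (v i) (.var i)).eval n φ = if tupOf n v i = φ i then 1 else 0 :=
      eval_Jterm hn (v i).is_le (hφ i)
    simp only [List.foldr_cons, eval, hJ, ih, List.forall_mem_cons]
    split_ifs <;> simp_all

lemma eval_conjTerm (hn : 0 < n) (hφ : ∀ i, φ i ∈ Ln n) (v : Fin r → Fin (n + 1))
    {s : LMTerm r} (hs : s.eval n φ ∈ Set.Icc 0 1) :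
    (conjTerm n v s).eval n φ = if tupOf n v = φ then s.eval n φ else 0 := by
  simp [conjTerm, eval_foldr_inf_Jterm hn hφ v hs, funext_iff]

end LMTerm

open LMTerm

theorem dnf_collapse_general (n r : ℕ) (hn : 2 ≤ n)
    (f : (Fin r → ℚ) → ℚ)
    (φ : Fin r → ℚ) (hφ : ∀ i, φ i ∈ Ln n) :
    (bigTerm n r f).eval n φ = (sTerm φ (f φ)).eval n φ := by
  have hn₀ : 0 < n := by omega
  have hIcc (t : LMTerm r) : t.eval n φ ∈ Set.Icc 0 1 :=
    eval_mem_Icc (fun i => Ln_subset_Icc n (hφ i)) t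
  have disjunct (v : Fin r → Fin (n + 1)) :
      (conjTerm n v (sTerm (tupOf n v) (f (tupOf n v)))).eval n φ =
        if tupOf n v = φ then (sTerm φ (f φ)).eval n φ else 0 := by
    rw [eval_conjTerm hn₀ hφ v (hIcc _)]
    split_ifs with h
    · rw [h]
    · rfl
  obtain ⟨v₀, hv₀⟩ := exists_tupOf_eq hφ
  apply le_antisymm
  · refine eval_foldr_sup_le (hIcc _).1 ?_
    simp only [List.forall_mem_map, disjunct]
    intro v _
    split_ifs
    exacts [le_rfl, (hIcc _).1]
  · calc (sTerm φ (f φ)).eval n φ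
        = (conjTerm n v₀ (sTerm (tupOf n v₀) (f (tupOf n v₀)))).eval n φ := by
          rw [disjunct, if_pos hv₀]
      _ ≤ (bigTerm n r f).eval n φ :=
          le_eval_foldr_sup (List.mem_map_of_mem (Finset.mem_toList.2 (Finset.mem_univ v₀)))

/-- The disjunction collapses: for a valuation φ with b_i := φ(x_i), the evaluation
of the DNF term t equals the evaluation of s(b_1, ..., b_r, f(b_1, ..., b_r)). -/
theorem dnf_collapse (n r : ℕ) (hn : 2 ≤ n) (hr : 1 ≤ r)
    (f : (Fin r → ℚ) → ℚ)
    (hf : ∀ a : Fin r → ℚ, (∀ i, a i ∈ Ln n) → f a ∈ Mset r a)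
    (φ : Fin r → ℚ) (hφ : ∀ i, φ i ∈ Ln n) :
    (bigTerm n r f).eval n φ = (sTerm φ (f φ)).eval n φ :=
  dnf_collapse_general n r hn f φ hφ
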